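/- Let w = (f,1) ∈ S = K ≀_Γ Sym(Γ) be a wreath cycle with trivial top component and terr(w) = {γ₀}. Then the map (γ₀^t, x) ↦ ([γ₀^t, x]E, 1) is a bijection from the orbit γ₀^H times the K-conjugacy class ([γ₀]f)^K onto the conjugacy class w^W of w in W = K ≀_Γ H, where [δ,x]E ∈ K^Γ takes value x at δ and 1_K elsewhere. -/

import Mathlib

set_option linter.unusedSectionVars false

/-- The wreath product `K ≀_Γ Sym(Γ)` (with right-action conventions from the paper):
multiplication `(f,h)(e,g) = (f · e^{h⁻¹}, hg)` where `[γ](f·e^{h⁻¹}) = [γ]f * [γ^h]e`. -/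
structure Wr (K : Type*) (Γ : Type*) where
  base : Γ → K
  top : Equiv.Perm Γ

namespace Wr

variable {K Γ : Type*} [Group K]

theorem ext' {w v : Wr K Γ} (h1 : w.base = v.base) (h2 : w.top = v.top) : w = v := by
  cases w; cases v; cases h1; cases h2; rfl

instance : Group (Wr K Γ) where
  mul w v := ⟨fun γ => w.base γ * v.base (w.top γ), w.top.trans v.top⟩
  one := ⟨fun _ => 1, 1⟩
  inv w := ⟨fun γ => (w.base (w.top⁻¹ γ))⁻¹, w.top⁻¹⟩
  mul_assoc a b c := ext' (funext fun γ => mul_assoc _ _ _) (Equiv.trans_assoc _ _ _)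
  one_mul a := ext' (funext fun γ => one_mul _) (Equiv.refl_trans _)
  mul_one a := ext' (funext fun γ => mul_one _) (Equiv.trans_refl _)
  inv_mul_cancel a := ext' (funext fun γ => inv_mul_cancel _) (Equiv.symm_trans_self _)

/-- The support of a permutation, as a set. -/
def psupp (h : Equiv.Perm Γ) : Set Γ := {γ | h γ ≠ γ}

/-- The territory of a wreath product element. -/
def terr (w : Wr K Γ) : Set Γ := psupp w.top ∪ {γ | w.base γ ≠ 1}

/-- Wreath cycles: either trivial top and a singleton territory, or the top is a
single nontrivial cycle and the territory equals its support. -/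
def IsWreathCycle (w : Wr K Γ) : Prop :=
  (w.top = 1 ∧ ∃ γ₀, terr w = {γ₀}) ∨ (w.top.IsCycle ∧ terr w = psupp w.top)

/-- The yade of `w` at `γ`: the ordered product `∏_{i=0}^{|h|-1} [γ^{h^i}]f`. -/
noncomputable def yade (w : Wr K Γ) (γ : Γ) : K :=
  ((List.range (orderOf w.top)).map fun i => w.base ((w.top ^ i) γ)).prod

end Wr

open Wr

/-! A trivial-top element has territory `{γ₀}` exactly when it is the single `[γ₀, x]E` with
`x ≠ 1`; conjugating a single by `a` moves its position by `a.top` and conjugates its value by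
`a.base`. So the conjugates of `w` under `K ≀_Γ H` are the singles `[γ₀^t, x^c]E` with `t ∈ H`,
`c ∈ K`, and a single with nontrivial value determines its position and value. -/

namespace Wr

variable {K Γ : Type*} [Group K]

@[simp]
theorem mul_base (a b : Wr K Γ) (γ : Γ) : (a * b).base γ = a.base γ * b.base (a.top γ) := rfl

@[simp]
theorem mul_top (a b : Wr K Γ) : (a * b).top = b.top * a.top := rfl

@[simp]
theorem inv_base (a : Wr K Γ) (γ : Γ) : a⁻¹.base γ = (a.base (a.top⁻¹ γ))⁻¹ := rfl

@[simp]
theorem inv_top (a : Wr K Γ) : a⁻¹.top = a.top⁻¹ := rfl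

section single

variable [DecidableEq Γ]

@[simps]
def single (δ : Γ) (x : K) : Wr K Γ := ⟨Pi.mulSingle δ x, 1⟩

theorem mk_ite_eq_single (δ : Γ) (x : K) :
    Wr.mk (fun γ => if γ = δ then x else 1) 1 = single δ x := by
  rw [single]
  congr 1
  ext γ
  rw [Pi.mulSingle_apply]

theorem eq_single_of_top_eq_one_of_terr_eq_singleton {w : Wr K Γ} {γ₀ : Γ} (hw : w.top = 1)
    (ht : terr w = {γ₀}) : w = single γ₀ (w.base γ₀) := by
  have hsupp : Function.mulSupport w.base = {γ₀} := by
    rw [← ht]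
    ext γ
    simp [terr, psupp, hw]
  refine ext' (funext fun γ => ?_) hw
  rcases eq_or_ne γ γ₀ with rfl | hγ
  · simp
  · rw [single_base, Pi.mulSingle_eq_of_ne hγ, ← Function.notMem_mulSupport, hsupp]
    exact hγ

theorem base_ne_one_of_terr_eq_singleton {w : Wr K Γ} {γ₀ : Γ} (hw : w.top = 1)
    (ht : terr w = {γ₀}) : w.base γ₀ ≠ 1 := by
  have hγ₀ : γ₀ ∈ terr w := ht ▸ rfl
  simpa [terr, psupp, hw] using hγ₀

theorem single_inj_of_ne_one {δ₁ δ₂ : Γ} {x₁ x₂ : K} (hx₁ : x₁ ≠ 1)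
    (h : single δ₁ x₁ = single δ₂ x₂) : δ₁ = δ₂ ∧ x₁ = x₂ := by
  have hb : (Pi.mulSingle δ₁ x₁ : Γ → K) = Pi.mulSingle δ₂ x₂ := congrArg base h
  have hx₂ : x₂ ≠ 1 := by
    rintro rfl
    exact hx₁ (by simpa using congrFun hb δ₁)
  have hδ : ({δ₁} : Set Γ) = {δ₂} := by
    rw [← Pi.mulSupport_mulSingle_of_ne hx₁, ← Pi.mulSupport_mulSingle_of_ne hx₂, hb]
  obtain rfl := Set.singleton_eq_singleton_iff.mp hδ
  exact ⟨rfl, (Pi.mulSingle_inj δ₁).mp hb⟩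

theorem inv_mul_single_mul (a : Wr K Γ) (δ : Γ) (x : K) :
    a⁻¹ * single δ x * a = single (a.top δ) ((a.base δ)⁻¹ * x * a.base δ) := by
  refine ext' (funext fun γ => ?_) (by simp)
  simp only [mul_base, inv_base, inv_top, mul_top, single_base, single_top, Pi.mulSingle_apply,
    Equiv.Perm.inv_eq_iff_eq]
  split_ifs with hγ <;> simp [hγ]

end single

end Wr

theorem bijOn_conjClass_trivialTop_general {K Γ : Type*} [Group K] [DecidableEq Γ]
    (H : Subgroup (Equiv.Perm Γ)) (w : Wr K Γ) (γ₀ : Γ)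
    (hw : w.top = 1) (ht : terr w = {γ₀}) :
    Set.BijOn
      (fun p : Γ × K => Wr.mk (fun γ => if γ = p.1 then p.2 else 1) 1)
      {p : Γ × K | (∃ t ∈ H, t γ₀ = p.1) ∧ IsConj (w.base γ₀) p.2}
      {v : Wr K Γ | ∃ a : Wr K Γ, a.top ∈ H ∧ a⁻¹ * w * a = v} := by
  simp only [mk_ite_eq_single]
  have hf := base_ne_one_of_terr_eq_singleton hw ht
  have hsingle := eq_single_of_top_eq_one_of_terr_eq_singleton hw ht
  set f := w.base γ₀
  rw [hsingle]
  refine ⟨?_, ?_, ?_⟩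
  · rintro ⟨δ, x⟩ ⟨⟨t, htH, rfl⟩, hconj⟩
    obtain ⟨c, rfl⟩ := isConj_iff.mp hconj
    exact ⟨⟨fun _ => c⁻¹, t⟩, htH, by simp [inv_mul_single_mul]⟩
  · rintro ⟨δ₁, x₁⟩ ⟨-, hc₁⟩ ⟨δ₂, x₂⟩ - h
    have hx₁ : x₁ ≠ 1 := fun h1 => hf (isConj_one_left.mp (h1 ▸ hc₁))
    obtain ⟨rfl, rfl⟩ := single_inj_of_ne_one hx₁ h
    rfl
  · rintro v ⟨a, haH, rfl⟩
    refine ⟨⟨a.top γ₀, (a.base γ₀)⁻¹ * f * a.base γ₀⟩,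
      ⟨⟨a.top, haH, rfl⟩, isConj_iff.mpr ⟨(a.base γ₀)⁻¹, by group⟩⟩, ?_⟩
    exact (inv_mul_single_mul a γ₀ _).symm

/-- for a wreath cycle `w = (f,1)` with `terr w = {γ₀}`, the map
`(δ, x) ↦ ([δ,x]E, 1)` is a bijection from `γ₀^H × ([γ₀]f)^K` onto the
`W`-conjugacy class of `w`. -/
theorem bijOn_conjClass_trivialTop {K Γ : Type*} [Group K] [Fintype Γ] [DecidableEq Γ]
    (H : Subgroup (Equiv.Perm Γ)) (w : Wr K Γ) (γ₀ : Γ)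
    (hw : w.top = 1) (ht : terr w = {γ₀}) :
    Set.BijOn
      (fun p : Γ × K => Wr.mk (fun γ => if γ = p.1 then p.2 else 1) 1)
      {p : Γ × K | (∃ t ∈ H, t γ₀ = p.1) ∧ IsConj (w.base γ₀) p.2}
      {v : Wr K Γ | ∃ a : Wr K Γ, a.top ∈ H ∧ a⁻¹ * w * a = v} :=
  bijOn_conjClass_trivialTop_general H w γ₀ hw ht
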